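/- Let n ≥ 2 and let Y ⊆ sl_n(ℂ) be a Zariski-closed subset stable under conjugation by GL_n(ℂ) and under multiplication by nonzero complex scalars, such that: (i) {X ∈ sl_n(ℂ) : rank X ≤ 1} ⊆ Y; and (ii) the intersection of Y with the affine subspace E_{n,1} + g^{E_{1,n}} is a finite set, where g^{E_{1,n}} = {Z ∈ sl_n(ℂ) : [Z, E_{1,n}] = 0} is the centralizer of the matrix unit E_{1,n}. Then Y = {X ∈ sl_n(ℂ) : rank X ≤ 1}. -/

import Mathlib

open Matrix

noncomputable section

abbrev Mat (n : ℕ) := Matrix (Fin n) (Fin n) ℂ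

abbrev GLn (n : ℕ) := Matrix.GeneralLinearGroup (Fin n) ℂ

/-- A subset of the space of `n×n` complex matrices is Zariski closed if it is the
common zero locus of a family of polynomials in the matrix entries. -/
def zclosed {n : ℕ} (S : Set (Mat n)) : Prop :=
  ∃ T : Set (MvPolynomial (Fin n × Fin n) ℂ),
    S = {X | ∀ p ∈ T, MvPolynomial.eval (fun q => X q.1 q.2) p = 0}

/-!
A matrix `X ∈ Y` of rank `≥ 2` is nonzero and traceless, hence not scalar, so `v, X v` are
independent for some `v`. Choose `φ` with `φ v = 0`, `φ (X v) = 1`; a basis with first vector `v`,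
last vector `X v - a v` (where `a = φ (X² v) / 2`) and the others in `ker φ ∩ ker (φ ∘ X)`
conjugates `X` into the Slodowy slice `E_{n,1} + g^{E_{1,n}}`, at a point other than `E_{n,1}`
because conjugation preserves rank. The Kazhdan action `M ↦ c² • Ad(c^h) M`, with
`h = E_{1,1} - E_{n,n}`, preserves `Y` and the slice, fixes `E_{n,1}` and multiplies every other
entry by a positive power of `c`, so the orbit of that point makes `Y` meet the slice in an
infinite set.
-/

open Module

theorem LinearIndependent.exists_dual_pair_eq_zero_one {K V : Type*} [Field K] [AddCommGroup V]
    [Module K V] {x y : V} (h : LinearIndependent K ![x, y]) :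
    ∃ φ : Dual K V, φ x = 0 ∧ φ y = 1 := by
  obtain ⟨φ, hφ⟩ := LinearMap.exists_extend ((Basis.span h).coord 1)
  have key : ∀ i, φ (Basis.span h i) = if i = 1 then 1 else 0 := fun i => by
    rw [← Submodule.subtype_apply, ← LinearMap.comp_apply, hφ,
      Basis.coord_apply, Basis.repr_self, Finsupp.single_apply, eq_comm]
  exact ⟨φ, by simpa [Basis.span_apply] using key 0, by simpa [Basis.span_apply] using key 1⟩

theorem Fintype.card_subtype_ne_and_ne {ι : Type*} [Fintype ι] [DecidableEq ι] {p q : ι}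
    (hpq : p ≠ q) : Fintype.card {j : ι // j ≠ p ∧ j ≠ q} = Fintype.card ι - 2 := by
  rw [Fintype.card_subtype]
  have : (Finset.univ.filter fun j : ι => j ≠ p ∧ j ≠ q) = Finset.univ \ {p, q} := by
    ext j; simp
  rw [this, Finset.card_sdiff_of_subset (Finset.subset_univ _), Finset.card_pair hpq,
    Finset.card_univ]

section NormalForm

variable {K V ι : Type*} [Field K] [AddCommGroup V] [Module K V] [FiniteDimensional K V]
  [Fintype ι]

theorem finrank_ker_inf_ker_add_two {v u : V} {ψ φ : Dual K V} (hψv : ψ v = 1) (hψu : ψ u = 0)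
    (hφv : φ v = 0) (hφu : φ u = 1) :
    finrank K (LinearMap.ker ψ ⊓ LinearMap.ker φ : Submodule K V) + 2 = finrank K V := by
  have hrange : LinearMap.range (ψ.prod φ) = ⊤ := by
    refine eq_top_iff.mpr fun ⟨s, t⟩ _ => ⟨s • v + t • u, ?_⟩
    simp [hψv, hψu, hφv, hφu]
  have := (ψ.prod φ).finrank_range_add_finrank_ker
  rw [LinearMap.ker_prod, hrange, finrank_top, finrank_prod, finrank_self] at this
  omega

theorem exists_basis_of_biorthogonal [DecidableEq ι] (hι : Fintype.card ι = finrank K V)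
    {e : ι → V} {ε : ι → Dual K V} (h : ∀ i j, ε i (e j) = if i = j then 1 else 0) :
    ∃ b : Basis ι K V, ⇑b = e ∧ ∀ i, b.coord i = ε i := by
  have he : LinearIndependent K e :=
    .of_pairwise_dual_eq_zero_one e ε (fun i j hij => by simpa [hij] using h i j)
      (fun i => by simpa using h i i)
  let b := basisOfLinearIndependentOfCardEqFinrank' e he hι
  have hb : ⇑b = e := coe_basisOfLinearIndependentOfCardEqFinrank' e he hι
  refine ⟨b, hb, fun i => b.ext fun j => ?_⟩
  rw [Basis.coord_apply, Basis.repr_self, Finsupp.single_apply, hb, h]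
  simp only [eq_comm]

theorem exists_biorthogonal_extend_dual_pair [DecidableEq ι]
    (hι : Fintype.card ι = finrank K V) {p q : ι} (hpq : p ≠ q) {v u : V} {ψ φ : Dual K V}
    (hψv : ψ v = 1) (hψu : ψ u = 0) (hφv : φ v = 0) (hφu : φ u = 1) :
    ∃ (e : ι → V) (ε : ι → Dual K V), e p = v ∧ e q = u ∧ ε p = ψ ∧ ε q = φ ∧
      ∀ i j, ε i (e j) = if i = j then 1 else 0 := by
  let W := LinearMap.ker ψ ⊓ LinearMap.ker φ
  have hWψ : ∀ w ∈ W, ψ w = 0 := fun w hw => (Submodule.mem_inf.mp hw).1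
  have hWφ : ∀ w ∈ W, φ w = 0 := fun w hw => (Submodule.mem_inf.mp hw).2
  let s := {j : ι // j ≠ p ∧ j ≠ q}
  have hs : Fintype.card s = finrank K W := by
    have : finrank K W + 2 = finrank K V := finrank_ker_inf_ker_add_two hψv hψu hφv hφu
    rw [Fintype.card_subtype_ne_and_ne hpq]
    omega
  let w : Basis s K W := (Module.finBasis K W).reindex (Fintype.equivFinOfCardEq hs).symm
  let π : V →ₗ[K] W := LinearMap.codRestrict W
    (LinearMap.id - LinearMap.smulRight ψ v - LinearMap.smulRight φ u) fun x => by
      simp [W, hψv, hψu, hφv, hφu]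
  have hπ : ∀ x, (π x : V) = x - ψ x • v - φ x • u := fun x => rfl
  have hπv : π v = 0 := by ext1; simp [hπ, hψv, hφv]
  have hπu : π u = 0 := by ext1; simp [hπ, hψu, hφu]
  have hπW : ∀ y : W, π y = y := fun y => by ext1; simp [hπ, hWψ y y.2, hWφ y y.2]
  let e : ι → V := fun j =>
    if h : j ≠ p ∧ j ≠ q then w ⟨j, h⟩ else if j = p then v else u
  let ε : ι → Dual K V := fun j =>
    if h : j ≠ p ∧ j ≠ q then (w.coord ⟨j, h⟩).comp π else if j = p then ψ else φ
  have he_p : e p = v := by simp [e]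
  have he_q : e q = u := by simp [e, hpq.symm]
  have he_s : ∀ j (h : j ≠ p ∧ j ≠ q), e j = w ⟨j, h⟩ := fun j h => dif_pos h
  have hε_p : ε p = ψ := by simp [ε]
  have hε_q : ε q = φ := by simp [ε, hpq.symm]
  have hε_s : ∀ j (h : j ≠ p ∧ j ≠ q), ε j = (w.coord ⟨j, h⟩).comp π :=
    fun j h => dif_pos h
  have hεe : ∀ i j, ε i (e j) = if i = j then 1 else 0 := by
    have hcases : ∀ j, p = j ∨ q = j ∨ (j ≠ p ∧ j ≠ q) := by tauto
    intro i j
    obtain rfl | rfl | hi := hcases i <;> obtain rfl | rfl | hj := hcases j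
    · simp [hε_p, he_p, hψv]
    · simp [hε_p, he_q, hψu, hpq]
    · simp [hε_p, he_s j hj, hWψ _ (w _).2, hj.1.symm]
    · simp [hε_q, he_p, hφv, hpq.symm]
    · simp [hε_q, he_q, hφu]
    · simp [hε_q, he_s j hj, hWφ _ (w _).2, hj.2.symm]
    · simp [hε_s i hi, he_p, hπv, hi.1]
    · simp [hε_s i hi, he_q, hπu, hi.2]
    · rw [hε_s i hi, he_s j hj, LinearMap.comp_apply, hπW, Basis.coord_apply, Basis.repr_self,
        Finsupp.single_apply]
      by_cases hij : i = j
      · subst hij; simp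
      · rw [if_neg hij, if_neg fun h => hij (congrArg Subtype.val h).symm]
  exact ⟨e, ε, he_p, he_q, hε_p, hε_q, hεe⟩

theorem exists_basis_extend_dual_pair (hι : Fintype.card ι = finrank K V) {p q : ι}
    (hpq : p ≠ q) {v u : V} {ψ φ : Dual K V} (hψv : ψ v = 1) (hψu : ψ u = 0)
    (hφv : φ v = 0) (hφu : φ u = 1) :
    ∃ b : Basis ι K V, b p = v ∧ b q = u ∧ b.coord p = ψ ∧ b.coord q = φ := by
  classical
  obtain ⟨e, ε, he_p, he_q, hε_p, hε_q, hεe⟩ :=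
    exists_biorthogonal_extend_dual_pair hι hpq hψv hψu hφv hφu
  obtain ⟨b, hb, hcoord⟩ := exists_basis_of_biorthogonal hι hεe
  exact ⟨b, hb ▸ he_p, hb ▸ he_q, hε_p ▸ hcoord p, hε_q ▸ hcoord q⟩

theorem exists_basis_normal_form (h2 : (2 : K) ≠ 0) (hι : Fintype.card ι = finrank K V)
    {p q : ι} (hpq : p ≠ q) {T : Module.End K V} {v : V} (hv : LinearIndependent K ![v, T v]) :
    ∃ (b : Basis ι K V) (a : K),
      T (b p) = a • b p + b q ∧ b.coord q ∘ₗ T = b.coord p + a • b.coord q := by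
  obtain ⟨φ, hφv, hφTv⟩ := hv.exists_dual_pair_eq_zero_one
  -- this choice of `a` makes the diagonal entries at `p` and `q` of the normal form agree
  set a := φ (T (T v)) / 2
  have hφTTv : φ (T (T v)) = 2 * a := by rw [mul_div_cancel₀ _ h2]
  obtain ⟨b, hbp, hbq, hcp, hcq⟩ := exists_basis_extend_dual_pair hι hpq
    (v := v) (u := T v - a • v) (ψ := φ ∘ₗ T - a • φ) (φ := φ)
    (by simp [hφv, hφTv]) (by simp [hφv, hφTv, hφTTv]; ring) hφv (by simp [hφv, hφTv])
  refine ⟨b, a, by rw [hbp, hbq]; abel, by rw [hcp, hcq]; abel⟩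

end NormalForm

section Slice

variable {K ι : Type*} [Field K] [Fintype ι] [DecidableEq ι]

def slodowySlice (e f : Matrix ι ι K) : Set (Matrix ι ι K) :=
  {X | ∃ Z : Matrix ι ι K, Z.trace = 0 ∧ Z * e = e * Z ∧ X = f + Z}

theorem Matrix.commute_single_one_iff {α : Type*} [Semiring α] {p q : ι}
    {Z : Matrix ι ι α} :
    Commute (single p q 1) Z ↔
      (∀ i ≠ p, Z i p = 0) ∧ (∀ j ≠ q, Z q j = 0) ∧ Z p p = Z q q := by
  refine ⟨fun h => ⟨fun i hi => col_eq_zero_of_commute_single h hi,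
    fun j hj => row_eq_zero_of_commute_single h hj, diag_eq_of_commute_single h⟩, ?_⟩
  rintro ⟨hcol, hrow, hdiag⟩
  ext i j
  by_cases hi : i = p <;> by_cases hj : j = q
  · subst hi hj; simp [hdiag]
  · subst hi; simp [hrow j hj, hj]
  · subst hj; simp [hcol i hi, hi]
  · simp [hi, hj]

theorem mem_slodowySlice_single_iff {p q : ι} (hpq : p ≠ q) {M : Matrix ι ι K} :
    M ∈ slodowySlice (single p q 1) (single q p 1) ↔
      M.trace = 0 ∧ Commute (single p q 1) (M - single q p 1) := by
  constructor
  · rintro ⟨Z, hZ, hcomm, rfl⟩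
    simp [trace_add, trace_single_eq_of_ne _ _ _ hpq.symm, hZ, Commute, SemiconjBy, hcomm]
  · rintro ⟨hM, hcomm⟩
    exact ⟨M - single q p 1, by simp [trace_sub, hM, trace_single_eq_of_ne _ _ _ hpq.symm],
      hcomm.eq.symm, by abel⟩

theorem commute_single_toMatrix_sub_single {V : Type*} [AddCommGroup V] [Module K V]
    {p q : ι} (hpq : p ≠ q) {T : Module.End K V} {b : Basis ι K V} {a : K}
    (hTp : T (b p) = a • b p + b q) (hTq : b.coord q ∘ₗ T = b.coord p + a • b.coord q) :
    Commute (single p q 1) (LinearMap.toMatrix b b T - single q p 1) := by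
  have hrow : ∀ j, LinearMap.toMatrix b b T q j = b.coord p (b j) + a * b.coord q (b j) := by
    intro j
    simpa [LinearMap.toMatrix_apply] using LinearMap.congr_fun hTq (b j)
  rw [Matrix.commute_single_one_iff]
  refine ⟨fun i hi => ?_, fun j hj => ?_, ?_⟩
  · simp [LinearMap.toMatrix_apply, hTp, Finsupp.single_apply, single_apply, hi]
  · simp [hrow, Finsupp.single_apply, single_apply, hj, eq_comm]
  · simp [LinearMap.toMatrix_apply, hTp, hrow, hpq, hpq.symm]

theorem exists_conj_mem_slodowySlice (h2 : (2 : K) ≠ 0) {p q : ι} (hpq : p ≠ q)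
    {X : Matrix ι ι K} (hX : X.trace = 0) {v : ι → K}
    (hv : LinearIndependent K ![v, X *ᵥ v]) :
    ∃ g : GL ι K, (↑g : Matrix ι ι K) * X * (↑g⁻¹ : Matrix ι ι K) ∈
      slodowySlice (single p q 1) (single q p 1) := by
  obtain ⟨b, a, hTp, hTq⟩ := exists_basis_normal_form h2 (by simp) hpq
    (T := toLin' X) (v := v) (by simpa using hv)
  let std := Pi.basisFun K ι
  let g : GL ι K := ⟨b.toMatrix std, std.toMatrix b, b.toMatrix_mul_toMatrix_flip std,
    std.toMatrix_mul_toMatrix_flip b⟩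
  have hg : (↑g : Matrix ι ι K) * X * (↑g⁻¹ : Matrix ι ι K) =
      LinearMap.toMatrix b b (toLin' X) := by
    change b.toMatrix std * X * std.toMatrix b = _
    conv_lhs => rw [← LinearMap.toMatrix'_toLin' X, ← LinearMap.toMatrix_eq_toMatrix']
    exact basis_toMatrix_mul_linearMap_toMatrix_mul_basis_toMatrix b std b std _
  refine ⟨g, (mem_slodowySlice_single_iff hpq).mpr ⟨?_, ?_⟩⟩
  · rw [trace_units_conj, hX]
  · rw [hg]
    exact commute_single_toMatrix_sub_single hpq hTp hTq

theorem exists_linearIndependent_pair_mulVec (hι : (Fintype.card ι : K) ≠ 0)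
    {X : Matrix ι ι K} (hX : X.trace = 0) (hX0 : X ≠ 0) :
    ∃ v : ι → K, LinearIndependent K ![v, X *ᵥ v] := by
  by_contra! h
  obtain ⟨a, ha⟩ :=
    (toLin' X).exists_eq_smul_id_of_forall_notLinearIndependent (by simpa using h)
  have hXa : X = a • 1 := by simpa using congrArg LinearMap.toMatrix' ha
  rw [hXa, trace_smul, trace_one, smul_eq_mul, mul_eq_zero] at hX
  obtain rfl := hX.resolve_right hι
  exact hX0 (by simpa using hXa)

end Slice

section Kazhdan

variable {ι : Type*} [DecidableEq ι] {p q : ι}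

/-- `1 + h i`, where `h = E_pp - E_qq` is the neutral element of the `sl₂`-triple
`(E_pq, h, E_qp)`. -/
def kazhdanWeight (p q i : ι) : ℕ := if i = p then 2 else if i = q then 0 else 1

theorem kazhdanWeight_add_swap (hpq : p ≠ q) (i : ι) :
    kazhdanWeight p q i + kazhdanWeight q p i = 2 := by
  unfold kazhdanWeight
  by_cases hp : i = p
  · simp [hp, hpq]
  · by_cases hq : i = q <;> simp [hp, hq, hpq.symm]

theorem kazhdanWeight_add_swap_pos {i j : ι} (hij : ¬(i = q ∧ j = p)) :
    0 < kazhdanWeight p q i + kazhdanWeight q p j := by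
  unfold kazhdanWeight
  by_cases hi : i = p
  · simp [hi]
  · by_cases hj : j = q
    · simp [hj]
    · by_cases hiq : i = q <;> by_cases hjp : j = p <;> simp_all

variable {K : Type*} [Field K] [Fintype ι]

def kazhdanAction (p q : ι) (c : K) (M : Matrix ι ι K) : Matrix ι ι K :=
  diagonal (fun i => c ^ kazhdanWeight p q i) * M * diagonal (fun j => c ^ kazhdanWeight q p j)

theorem kazhdanAction_apply (c : K) (M : Matrix ι ι K) (i j : ι) :
    kazhdanAction p q c M i j = c ^ (kazhdanWeight p q i + kazhdanWeight q p j) * M i j := by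
  simp only [kazhdanAction, diagonal_mul, mul_diagonal, pow_add]
  ring

theorem kazhdanAction_sub (c : K) (A B : Matrix ι ι K) :
    kazhdanAction p q c (A - B) = kazhdanAction p q c A - kazhdanAction p q c B := by
  simp [kazhdanAction, mul_sub, sub_mul]

theorem kazhdanAction_single (hpq : p ≠ q) (c : K) :
    kazhdanAction p q c (single q p 1) = single q p 1 := by
  ext i j
  rw [kazhdanAction_apply]
  by_cases h : i = q ∧ j = p
  · simp [h.1, h.2, kazhdanWeight, hpq, hpq.symm]
  · rw [single_apply_of_ne (h := fun h' => h ⟨h'.1.symm, h'.2.symm⟩), mul_zero]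

theorem trace_kazhdanAction (hpq : p ≠ q) (c : K) (M : Matrix ι ι K) :
    (kazhdanAction p q c M).trace = c ^ 2 * M.trace := by
  simp [trace, kazhdanAction_apply, kazhdanWeight_add_swap hpq, Finset.mul_sum]

theorem kazhdanAction_eq_smul_conj (hpq : p ≠ q) {c : K} (hc : c ≠ 0) (M : Matrix ι ι K) :
    ∃ g : GL ι K,
      kazhdanAction p q c M =
        c ^ 2 • ((↑g : Matrix ι ι K) * M * (↑g⁻¹ : Matrix ι ι K)) := by
  let d : ι → K := fun i => c ^ kazhdanWeight p q i
  refine ⟨⟨diagonal d, diagonal d⁻¹, by simp [d, hc], by simp [d, hc]⟩, ?_⟩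
  ext i j
  change _ = c ^ 2 * (diagonal d * M * diagonal d⁻¹) i j
  simp only [kazhdanAction_apply, mul_diagonal, diagonal_mul, Pi.inv_apply, d]
  rw [← kazhdanWeight_add_swap hpq j, pow_add, pow_add]
  field_simp

theorem kazhdanAction_mem_slodowySlice (hpq : p ≠ q) (c : K) {M : Matrix ι ι K}
    (hM : M ∈ slodowySlice (single p q 1) (single q p 1)) :
    kazhdanAction p q c M ∈ slodowySlice (single p q 1) (single q p 1) := by
  rw [mem_slodowySlice_single_iff hpq] at hM ⊢
  obtain ⟨htr, hcomm⟩ := hM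
  refine ⟨by rw [trace_kazhdanAction hpq, htr, mul_zero], ?_⟩
  rw [← kazhdanAction_single hpq c, ← kazhdanAction_sub]
  obtain ⟨hcol, hrow, hdiag⟩ := commute_single_one_iff.mp hcomm
  refine commute_single_one_iff.mpr ⟨fun i hi => ?_, fun j hj => ?_, ?_⟩
  · rw [kazhdanAction_apply, hcol i hi, mul_zero]
  · rw [kazhdanAction_apply, hrow j hj, mul_zero]
  · rw [kazhdanAction_apply, kazhdanAction_apply, hdiag, kazhdanWeight_add_swap hpq,
      kazhdanWeight_add_swap hpq]

theorem infinite_inter_slodowySlice [CharZero K] {Y : Set (Matrix ι ι K)}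
    (hconj : ∀ g : GL ι K, ∀ X ∈ Y,
      (↑g : Matrix ι ι K) * X * (↑g⁻¹ : Matrix ι ι K) ∈ Y)
    (hscal : ∀ c : K, c ≠ 0 → ∀ X ∈ Y, c • X ∈ Y) (hpq : p ≠ q) {M : Matrix ι ι K}
    (hM : M ∈ Y ∩ slodowySlice (single p q 1) (single q p 1)) (hMf : M ≠ single q p 1) :
    (Y ∩ slodowySlice (single p q 1) (single q p 1)).Infinite := by
  obtain ⟨i, j, hij⟩ : ∃ i j, M i j ≠ single q p 1 i j := by
    contrapose! hMf
    exact Matrix.ext hMf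
  have hqp : ¬(i = q ∧ j = p) := by
    rintro ⟨rfl, rfl⟩
    have := row_eq_zero_of_commute_single ((mem_slodowySlice_single_iff hpq).mp hM.2).2 hpq
    exact hij (sub_eq_zero.mp this)
  have hMij : M i j ≠ 0 := by
    rwa [single_apply_of_ne (h := fun h => hqp ⟨h.1.symm, h.2.symm⟩)] at hij
  let c : ℕ → K := fun m => (m + 1 : ℕ)
  have hc : ∀ m, c m ≠ 0 := fun m => Nat.cast_ne_zero.mpr m.succ_ne_zero
  refine Set.infinite_of_injective_forall_mem (f := fun m => kazhdanAction p q (c m) M)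
    (fun m m' h => ?_) fun m => ⟨?_, kazhdanAction_mem_slodowySlice hpq _ hM.2⟩
  · have := congrFun (congrFun h i) j
    simp only [kazhdanAction_apply, mul_left_inj' hMij, c] at this
    norm_cast at this
    exact Nat.succ_injective (Nat.pow_left_injective (kazhdanWeight_add_swap_pos hqp).ne' this)
  · obtain ⟨g, hg⟩ := kazhdanAction_eq_smul_conj hpq (hc m) M
    rw [hg]
    exact hscal _ (pow_ne_zero 2 (hc m)) _ (hconj g M hM.1)

end Kazhdan

theorem stmt_19 (n : ℕ) (hn : 2 ≤ n)
    -- `e = E_{1,n}` and `f = E_{n,1}`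
    (e f : Mat n)
    (he : e = Matrix.single ⟨0, by omega⟩ ⟨n - 1, by omega⟩ (1 : ℂ))
    (hf : f = Matrix.single ⟨n - 1, by omega⟩ ⟨0, by omega⟩ (1 : ℂ))
    -- `Y` is a Zariski-closed subset of `sl_n(ℂ)`
    (Y : Set (Mat n)) (hYsl : Y ⊆ {X : Mat n | X.trace = 0})
    -- stable under conjugation and under multiplication by nonzero scalars
    (hconj : ∀ g : GLn n, ∀ X ∈ Y, (↑g : Mat n) * X * (↑g⁻¹ : Mat n) ∈ Y)
    (hscal : ∀ c : ℂ, c ≠ 0 → ∀ X ∈ Y, c • X ∈ Y)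
    -- (i) the closure of the minimal nilpotent orbit is contained in `Y`
    (hmin : {X : Mat n | X.trace = 0 ∧ X.rank ≤ 1} ⊆ Y)
    -- (ii) `Y` meets the Slodowy slice `f + g^e` in a finite set
    (hfin : (Y ∩ {X : Mat n | ∃ Z : Mat n, Z.trace = 0 ∧ Z * e = e * Z ∧
      X = f + Z}).Finite) :
    Y = {X : Mat n | X.trace = 0 ∧ X.rank ≤ 1} := by
  subst he hf
  refine Set.Subset.antisymm (fun X hX => ⟨hYsl hX, ?_⟩) hmin
  by_contra hrank
  have hpq : (⟨0, by omega⟩ : Fin n) ≠ ⟨n - 1, by omega⟩ := by simp [Fin.ext_iff]; omega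
  obtain ⟨v, hv⟩ := exists_linearIndependent_pair_mulVec (by simp; omega) (hYsl hX)
    (by rintro rfl; simp at hrank)
  obtain ⟨g, hg⟩ := exists_conj_mem_slodowySlice two_ne_zero hpq (hYsl hX) hv
  refine infinite_inter_slodowySlice hconj hscal hpq ⟨hconj g X hX, hg⟩
    (fun hgX => hrank ?_) hfin
  calc X.rank = ((↑g : Mat n) * X * (↑g⁻¹ : Mat n)).rank := by
        rw [rank_mul_eq_left_of_isUnit_det _ _ ((isUnit_iff_isUnit_det _).mp (g⁻¹).isUnit),
          rank_mul_eq_right_of_isUnit_det _ _ ((isUnit_iff_isUnit_det _).mp g.isUnit)]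
    _ ≤ 1 := by
        rw [hgX, single_eq_single_vecMulVec_single]
        exact rank_vecMulVec_le _ _
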